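/- arXiv:2309.04643 — 8 statements merged into one kernel-verified Lean document; each statement's English description precedes it below -/
import Mathlib

section
/- Let f : ℝⁿ → ℝ be L-Lipschitz with respect to norm ‖·‖ and f_reg(x) := f(x) + 2L · max(0, ‖x − c‖ − r) with r > 0. For any y with ‖y − c‖ ≥ r, setting y' := c + (r/‖y − c‖)(y − c), we have ‖y' − c‖ = r and f_reg(y') = f(y') ≤ f_reg(y) − L(‖y − c‖ − r). -/
/-!
The projection `y'` lies on the segment from `c` to `y`, at distance `‖y - c‖ - r` from `y`.
The Lipschitz bound therefore lets `f` grow by at most `L (‖y - c‖ - r)` from `y` to `y'`,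
while the penalty `2L (‖y - c‖ - r)` paid at `y` vanishes at `y'`.
-/

section RadialProjection

variable {E : Type*} [NormedAddCommGroup E] [NormedSpace ℝ E]

noncomputable def radialProj (c : E) (r : ℝ) (y : E) : E :=
  c + (r / ‖y - c‖) • (y - c)

theorem radialProj_sub_center (c : E) (r : ℝ) (y : E) :
    radialProj c r y - c = (r / ‖y - c‖) • (y - c) :=
  add_sub_cancel_left _ _

theorem radialProj_sub_self (c : E) (r : ℝ) (y : E) :
    radialProj c r y - y = -((1 - r / ‖y - c‖) • (y - c)) := by
  rw [radialProj, sub_smul, one_smul]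
  abel

theorem norm_radialProj_sub_center {c : E} {r : ℝ} {y : E} (hr : 0 ≤ r) (hry : r ≤ ‖y - c‖) :
    ‖radialProj c r y - c‖ = r := by
  rcases hr.eq_or_lt with rfl | hr
  · simp [radialProj]
  have hyc : ‖y - c‖ ≠ 0 := (hr.trans_le hry).ne'
  rw [radialProj_sub_center, norm_smul, Real.norm_of_nonneg (by positivity),
    div_mul_cancel₀ _ hyc]

theorem norm_radialProj_sub_self {c : E} {r : ℝ} {y : E} (hr : 0 ≤ r) (hry : r ≤ ‖y - c‖) :
    ‖radialProj c r y - y‖ = ‖y - c‖ - r := by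
  rcases hr.eq_or_lt with rfl | hr
  · simp [radialProj, norm_sub_rev]
  have hyc : 0 < ‖y - c‖ := hr.trans_le hry
  have hratio : 0 ≤ 1 - r / ‖y - c‖ := sub_nonneg.2 ((div_le_one hyc).2 hry)
  rw [radialProj_sub_self, norm_neg, norm_smul, Real.norm_of_nonneg hratio, sub_mul, one_mul,
    div_mul_cancel₀ _ hyc.ne']

end RadialProjection

/-- radial projection onto the ball decreases the regularized objective. -/
theorem stmt_2 {E : Type*} [NormedAddCommGroup E] [NormedSpace ℝ E]
    (f : E → ℝ) (L : ℝ)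
    (hlip : ∀ x y : E, |f x - f y| ≤ L * ‖x - y‖)
    (c : E) (r : ℝ) (hr : 0 < r)
    (freg : E → ℝ)
    (hfreg : ∀ x : E, freg x = f x + 2 * L * max 0 (‖x - c‖ - r))
    (y : E) (hy : r ≤ ‖y - c‖)
    (y' : E) (hy' : y' = c + (r / ‖y - c‖) • (y - c)) :
    ‖y' - c‖ = r ∧ freg y' = f y' ∧ f y' ≤ freg y - L * (‖y - c‖ - r) := by
  replace hy' : y' = radialProj c r y := hy'
  subst hy'
  have hnorm := norm_radialProj_sub_center hr.le hy
  refine ⟨hnorm, by rw [hfreg, hnorm, sub_self, max_self, mul_zero, add_zero], ?_⟩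
  calc f (radialProj c r y)
      ≤ f y + L * ‖radialProj c r y - y‖ := by
        linarith [(le_abs_self _).trans (hlip (radialProj c r y) y)]
    _ = freg y - L * (‖y - c‖ - r) := by
        rw [hfreg, norm_radialProj_sub_self hr.le hy, max_eq_right (sub_nonneg.2 hy)]
        ring
end

section
/- Let f : ℝⁿ → ℝ be convex and L-Lipschitz with respect to norm ‖·‖, c ∈ ℝⁿ, r > 0, and f_reg(x) := f(x) + 2L · max(0, ‖x − c‖ − r). Then f_reg attains an unconstrained minimizer, and every minimizer x* of f_reg satisfies ‖x* − c‖ ≤ r and f_reg(x*) = f(x*) = min over {x : ‖x − c‖ ≤ r} of f(x). -/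
/-- the regularized function attains an unconstrained minimizer, and every
minimizer lies in the ball of radius `r` around `c`, where `f_reg` agrees with `f` and
attains the constrained minimum of `f` over the ball. -/
theorem stmt_3 {E : Type*} [NormedAddCommGroup E] [NormedSpace ℝ E]
    [FiniteDimensional ℝ E]
    (f : E → ℝ) (L : ℝ) (hL : 0 < L)
    (hconv : ConvexOn ℝ Set.univ f)
    (hlip : ∀ x y : E, |f x - f y| ≤ L * ‖x - y‖)
    (c : E) (r : ℝ) (hr : 0 < r)
    (freg : E → ℝ)
    (hfreg : ∀ x : E, freg x = f x + 2 * L * max 0 (‖x - c‖ - r)) :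
    (∃ xstar : E, ∀ z : E, freg xstar ≤ freg z) ∧
      ∀ xstar : E, (∀ z : E, freg xstar ≤ freg z) →
        ‖xstar - c‖ ≤ r ∧ freg xstar = f xstar ∧
          ∀ z : E, ‖z - c‖ ≤ r → f xstar ≤ f z := by
  have hcont : Continuous f := by
    have : LipschitzWith L.toNNReal f := by
      apply LipschitzWith.of_dist_le_mul
      intro x y
      rw [Real.coe_toNNReal L hL.le]
      simpa [Real.dist_eq, dist_eq_norm] using hlip x y
    exact this.continuous
  obtain ⟨m, hm_mem, hm_min⟩ :=
    (isCompact_closedBall c r).exists_isMinOn ⟨c, by simp [hr.le]⟩ hcont.continuousOn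
  have hmball : ∀ z : E, ‖z - c‖ ≤ r → f m ≤ f z := by
    intro z hz
    exact hm_min (by simpa [Metric.mem_closedBall, dist_eq_norm] using hz)
  -- key inequality
  have key : ∀ z : E, f m + L * max 0 (‖z - c‖ - r) ≤ freg z := by
    intro z
    rw [hfreg]
    by_cases h : ‖z - c‖ ≤ r
    · have hmax : max 0 (‖z - c‖ - r) = 0 := max_eq_left (by linarith)
      rw [hmax]
      have := hmball z h
      linarith
    · push_neg at h
      have hpos : 0 < ‖z - c‖ := lt_trans hr h
      set t : ℝ := r / ‖z - c‖ with ht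
      have ht0 : 0 ≤ t := div_nonneg hr.le hpos.le
      have ht1 : t ≤ 1 := (div_le_one hpos).mpr h.le
      set z' : E := c + t • (z - c) with hz'
      have hz'c : ‖z' - c‖ = r := by
        have hzc : z' - c = t • (z - c) := by rw [hz']; abel
        rw [hzc, norm_smul, Real.norm_eq_abs, abs_of_nonneg ht0, ht,
          div_mul_cancel₀ _ hpos.ne']
      have hzz' : ‖z - z'‖ = ‖z - c‖ - r := by
        have hzd : z - z' = (1 - t) • (z - c) := by
          rw [hz', sub_smul, one_smul]; abel
        rw [hzd, norm_smul, Real.norm_eq_abs, abs_of_nonneg (by linarith), ht]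
        field_simp
      have h1 : f z' - f z ≤ L * (‖z - c‖ - r) := by
        have := hlip z' z
        have habs : |f z' - f z| ≤ L * ‖z - z'‖ := by
          rw [show ‖z' - z‖ = ‖z - z'‖ from norm_sub_rev z' z] at this
          exact this
        rw [hzz'] at habs
        exact le_trans (le_abs_self _) habs
      have h2 : f m ≤ f z' := hmball z' (le_of_eq hz'c)
      have hmax : max 0 (‖z - c‖ - r) = ‖z - c‖ - r := max_eq_right (by linarith)
      rw [hmax]
      nlinarith [hL]
  have hfm : freg m = f m := by
    rw [hfreg]
    have : max 0 (‖m - c‖ - r) = 0 := by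
      apply max_eq_left
      have : ‖m - c‖ ≤ r := by simpa [Metric.mem_closedBall, dist_eq_norm] using hm_mem
      linarith
    rw [this]; ring
  constructor
  · refine ⟨m, fun z => ?_⟩
    rw [hfm]
    have := key z
    have hmax0 : 0 ≤ max 0 (‖z - c‖ - r) := le_max_left _ _
    nlinarith
  · intro xstar hmin
    have h1 : freg xstar ≤ f m := hfm ▸ hmin m
    have h2 := key xstar
    have hmax0 : 0 ≤ max 0 (‖xstar - c‖ - r) := le_max_left _ _
    have hmx : max 0 (‖xstar - c‖ - r) = 0 := by nlinarith
    have hball : ‖xstar - c‖ ≤ r := by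
      by_contra hc
      push_neg at hc
      have : max 0 (‖xstar - c‖ - r) = ‖xstar - c‖ - r := max_eq_right (by linarith)
      rw [this] at hmx; linarith
    have heq : freg xstar = f xstar := by
      rw [hfreg, hmx]; ring
    refine ⟨hball, heq, fun z hz => ?_⟩
    have h3 : freg z ≤ f z := by
      rw [hfreg]
      have : max 0 (‖z - c‖ - r) = 0 := max_eq_left (by linarith)
      rw [this]; linarith
    have := hmin z
    linarith [heq ▸ this]
end

section
/- Let f : 2^[n] → ℤ be submodular with maximal minimizer S* (the union of all minimizers). Then for every subset T ⊆ S* and every element i ∈ [n] with f(T ∪ {i}) ≤ f(T), we have i ∈ S*. -/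
/-- if `S*` is the maximal minimizer of a submodular `f` and `T ⊆ S*`,
then any element with non-positive marginal at `T` belongs to `S*`. -/
theorem stmt_8 (n : ℕ) (f : Finset (Fin n) → ℤ)
    (hsub : ∀ A B : Finset (Fin n), f (A ∪ B) + f (A ∩ B) ≤ f A + f B)
    (Sstar : Finset (Fin n))
    (hmin : ∀ X : Finset (Fin n), f Sstar ≤ f X)
    (hmax : ∀ X : Finset (Fin n), (∀ Y : Finset (Fin n), f X ≤ f Y) → X ⊆ Sstar)
    (T : Finset (Fin n)) (hT : T ⊆ Sstar)
    (i : Fin n) (hi : f (insert i T) ≤ f T) :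
    i ∈ Sstar := by
  by_cases hiS : i ∈ Sstar
  · exact hiS
  · have h := hsub (insert i T) Sstar
    have hU : insert i T ∪ Sstar = insert i Sstar := by
      ext x
      have := @hT x
      simp only [Finset.mem_insert, Finset.mem_union] at *
      tauto
    have hI : insert i T ∩ Sstar = T := by
      ext x
      have := @hT x
      have : x = i → x ∉ Sstar := by rintro rfl; exact hiS
      simp only [Finset.mem_insert, Finset.mem_inter] at *
      tauto
    rw [hU, hI] at h
    have hle : f (insert i Sstar) ≤ f Sstar := by linarith
    have := hmax (insert i Sstar) (fun Y => le_trans hle (hmin Y))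
    exact this (Finset.mem_insert_self i Sstar)
end

section
/- Let f : 2^[n] → ℤ be submodular with maximal minimizer S*, and let T ⊆ S* satisfy f(T ∪ {i}) ≤ f(T) for all i ∈ S* \ T. Define the augmentation A(T) := T ∪ {i ∉ T : f(T ∪ {i}) ≤ f(T)}. Then A(T) = S*. -/
/-- augmenting an anchor set `T ⊆ S*` recovers the maximal minimizer:
`A(T) = T ∪ {i ∉ T : f(T ∪ {i}) ≤ f(T)} = S*`. -/
theorem stmt_11 (n : ℕ) (f : Finset (Fin n) → ℤ)
    (hsub : ∀ A B : Finset (Fin n), f (A ∪ B) + f (A ∩ B) ≤ f A + f B)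
    (Sstar : Finset (Fin n))
    (hmin : ∀ X : Finset (Fin n), f Sstar ≤ f X)
    (hmax : ∀ X : Finset (Fin n), (∀ Y : Finset (Fin n), f X ≤ f Y) → X ⊆ Sstar)
    (T : Finset (Fin n)) (hT : T ⊆ Sstar)
    (hanchor : ∀ i ∈ Sstar \ T, f (insert i T) ≤ f T) :
    T ∪ Finset.univ.filter (fun i => i ∉ T ∧ f (insert i T) ≤ f T) = Sstar := by
  apply Finset.Subset.antisymm
  · intro i hi
    rcases Finset.mem_union.mp hi with h | h
    · exact hT h
    · simp only [Finset.mem_filter, Finset.mem_univ, true_and] at h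
      obtain ⟨hiT, hle⟩ := h
      by_contra hiS
      have hsub' := hsub Sstar (insert i T)
      have hTs : ∀ x, x ∈ T → x ∈ Sstar := fun x hx => hT hx
      have hU : Sstar ∪ insert i T = insert i Sstar := by
        ext x
        simp only [Finset.mem_union, Finset.mem_insert]
        constructor
        · rintro (hx | rfl | hx)
          · exact Or.inr hx
          · exact Or.inl rfl
          · exact Or.inr (hTs x hx)
        · rintro (rfl | hx)
          · exact Or.inr (Or.inl rfl)
          · exact Or.inl hx
      have hI : Sstar ∩ insert i T = T := by
        ext x
        simp only [Finset.mem_inter, Finset.mem_insert]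
        constructor
        · rintro ⟨hx, rfl | hx2⟩
          · exact absurd hx hiS
          · exact hx2
        · intro hx; exact ⟨hTs x hx, Or.inr hx⟩
      rw [hU, hI] at hsub'
      have hle' : f (insert i Sstar) ≤ f Sstar := by linarith
      have := hmax _ (fun Y => le_trans hle' (hmin Y))
      exact hiS (this (Finset.mem_insert_self i Sstar))
  · intro i hi
    by_cases hiT : i ∈ T
    · exact Finset.mem_union_left _ hiT
    · refine Finset.mem_union_right _ ?_
      simp only [Finset.mem_filter, Finset.mem_univ, true_and]
      exact ⟨hiT, hanchor i (Finset.mem_sdiff.mpr ⟨hi, hiT⟩)⟩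
end

section
/- Let f : 2^[n] → ℤ be submodular with f(∅) = 0 and |f(S)| ≤ M for all S. Then min over all S ⊆ [n] with |S| ≤ M of f(A(S)) equals min over all S ⊆ [n] of f(S), where A(S) := S ∪ {i ∉ S : f(S ∪ {i}) ≤ f(S)}. -/
/-- correctness of the 2-round AugmentingSets algorithm: the minimum of
`f (A S)` over `M`-sparse sets `S` equals the global minimum of `f`, where
`A S = S ∪ {i ∉ S : f (S ∪ {i}) ≤ f S}`. -/
theorem stmt_12 (n : ℕ) (f : Finset (Fin n) → ℤ) (M : ℤ) (hM : 0 < M)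
    (hsub : ∀ A B : Finset (Fin n), f (A ∪ B) + f (A ∩ B) ≤ f A + f B)
    (h0 : f ∅ = 0)
    (hbd : ∀ S : Finset (Fin n), |f S| ≤ M)
    (A : Finset (Fin n) → Finset (Fin n))
    (hA : ∀ S : Finset (Fin n),
      A S = S ∪ Finset.univ.filter (fun i => i ∉ S ∧ f (insert i S) ≤ f S)) :
    sInf ((fun S => f (A S)) '' {S : Finset (Fin n) | (S.card : ℤ) ≤ M}) =
      sInf (Set.range f) := by
  classical
  -- a global minimizer T
  obtain ⟨T, -, hT⟩ := Finset.exists_min_image (Finset.univ : Finset (Finset (Fin n))) f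
    ⟨∅, Finset.mem_univ _⟩
  have hTmin : ∀ U, f T ≤ f U := fun U => hT U (Finset.mem_univ U)
  -- greedy construction of S ⊆ T with card S ≤ f S and all remaining marginals nonpositive
  have key : ∀ k : ℕ, ∀ S : Finset (Fin n), S ⊆ T → (S.card : ℤ) ≤ f S → (T \ S).card = k →
      ∃ S', S' ⊆ T ∧ (S'.card : ℤ) ≤ f S' ∧ ∀ i ∈ T, i ∉ S' → f (insert i S') ≤ f S' := by
    intro k
    induction k using Nat.strong_induction_on with
    | _ k ih =>
      intro S hST hcard hk
      by_cases h : ∀ i ∈ T, i ∉ S → f (insert i S) ≤ f S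
      · exact ⟨S, hST, hcard, h⟩
      · push_neg at h
        obtain ⟨i, hiT, hiS, hfi⟩ := h
        have hk0 : i ∈ T \ S := Finset.mem_sdiff.mpr ⟨hiT, hiS⟩
        have hins : insert i S ⊆ T := Finset.insert_subset hiT hST
        have hcard' : (((insert i S).card : ℤ)) ≤ f (insert i S) := by
          rw [Finset.card_insert_of_notMem hiS]
          push_cast
          omega
        have hsd : T \ insert i S = (T \ S).erase i := by
          ext x
          simp only [Finset.mem_sdiff, Finset.mem_erase, Finset.mem_insert]
          tauto
        have hlt : (T \ insert i S).card < k := by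
          rw [hsd, ← hk]
          exact Finset.card_erase_lt_of_mem hk0
        exact ih _ hlt _ hins hcard' rfl
  obtain ⟨S, hST, hScard, hSaug⟩ :=
    key (T \ ∅).card ∅ (Finset.empty_subset T) (by simp [h0]) rfl
  have hSM : (S.card : ℤ) ≤ M := hScard.trans ((le_abs_self _).trans (hbd S))
  -- T ⊆ A S
  have hTA : T ⊆ A S := by
    intro i hiT
    rw [hA]
    by_cases hiS : i ∈ S
    · exact Finset.mem_union_left _ hiS
    · exact Finset.mem_union_right _
        (Finset.mem_filter.mpr ⟨Finset.mem_univ _, hiS, hSaug i hiT hiS⟩)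
  -- adding elements with nonpositive marginal at S to any superset of S doesn't increase f
  have claim : ∀ F : Finset (Fin n),
      (∀ j ∈ F, j ∉ T ∧ f (insert j S) ≤ f S) → f (T ∪ F) ≤ f T := by
    intro F
    induction F using Finset.induction_on with
    | empty => simp
    | @insert j F hjF ih =>
      intro hF
      obtain ⟨hjT, hjf⟩ := hF j (Finset.mem_insert_self _ _)
      have ihF : f (T ∪ F) ≤ f T := ih (fun x hx => hF x (Finset.mem_insert_of_mem hx))
      have hsub' := hsub (insert j S) (T ∪ F)
      have hu : insert j S ∪ (T ∪ F) = insert j (T ∪ F) := by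
        ext x
        simp only [Finset.mem_union, Finset.mem_insert]
        have hx : x ∈ S → x ∈ T := fun h => hST h
        tauto
      have hi : insert j S ∩ (T ∪ F) = S := by
        ext x
        simp only [Finset.mem_inter, Finset.mem_union, Finset.mem_insert]
        have hx : x ∈ S → x ∈ T := fun h => hST h
        constructor
        · rintro ⟨h1 | h1, h2 | h2⟩
          · exact absurd (h1 ▸ h2) hjT
          · exact absurd (h1 ▸ h2) hjF
          · exact h1
          · exact h1
        · intro h
          exact ⟨Or.inr h, Or.inl (hx h)⟩
      rw [hu, hi] at hsub'
      have : f (insert j (T ∪ F)) ≤ f (T ∪ F) := by linarith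
      rw [Finset.union_insert]
      linarith
  -- f (A S) = f T
  have hAeq : f (A S) = f T := by
    have hdecomp : T ∪ (A S \ T) = A S := Finset.union_sdiff_of_subset hTA
    have hprop : ∀ j ∈ A S \ T, j ∉ T ∧ f (insert j S) ≤ f S := by
      intro j hj
      obtain ⟨hjA, hjT⟩ := Finset.mem_sdiff.mp hj
      rw [hA] at hjA
      rcases Finset.mem_union.mp hjA with h | h
      · exact absurd (hST h) hjT
      · obtain ⟨-, -, h2⟩ := Finset.mem_filter.mp h
        exact ⟨hjT, h2⟩
    have h1 : f (A S) ≤ f T := by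
      rw [← hdecomp]; exact claim _ hprop
    exact le_antisymm h1 (hTmin _)
  -- compute both infima
  have hbddR : BddBelow (Set.range f) := by
    refine ⟨-M, ?_⟩
    rintro x ⟨U, rfl⟩
    have := abs_le.mp (hbd U)
    linarith [this.1]
  have hbddL : BddBelow ((fun S => f (A S)) '' {S : Finset (Fin n) | (S.card : ℤ) ≤ M}) := by
    refine ⟨-M, ?_⟩
    rintro x ⟨U, -, rfl⟩
    have := abs_le.mp (hbd (A U))
    linarith [this.1]
  have hR : sInf (Set.range f) = f T :=
    le_antisymm (csInf_le hbddR ⟨T, rfl⟩)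
      (le_csInf ⟨f T, T, rfl⟩ (by rintro x ⟨U, rfl⟩; exact hTmin U))
  have hL : sInf ((fun S => f (A S)) '' {S : Finset (Fin n) | (S.card : ℤ) ≤ M}) = f T :=
    le_antisymm (csInf_le hbddL ⟨S, hSM, hAeq⟩)
      (le_csInf ⟨f (A S), S, hSM, rfl⟩ (by rintro x ⟨U, -, rfl⟩; exact hTmin (A U)))
  rw [hR, hL]
end

section
/- Let f : 2^[n] → ℤ be submodular with f(∅) = 0 and |f(S)| ≤ M for all S ⊆ [n]. For any x ∈ ℝⁿ, the Lovász-extension subgradient g(x) ∈ ℝⁿ, defined coordinatewise by g(x)_{π(i)} = f(S_{π,i}) − f(S_{π,i−1}) where π sorts x in decreasing order and S_{π,j} = {π(1), …, π(j)}, satisfies ‖g(x)‖₁ ≤ 3M. -/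
/-- the Lovász-extension subgradient at any point `x`, given by marginal
gains of `f` along the chain of prefixes of the permutation sorting `x` decreasingly,
has ℓ₁-norm at most `3M`. -/
theorem stmt_14 (n : ℕ) (f : Finset (Fin n) → ℤ) (M : ℤ)
    (hsub : ∀ A B : Finset (Fin n), f (A ∪ B) + f (A ∩ B) ≤ f A + f B)
    (h0 : f ∅ = 0)
    (hbd : ∀ S : Finset (Fin n), |f S| ≤ M)
    (x : Fin n → ℝ) (π : Equiv.Perm (Fin n))
    (hsort : ∀ i j : Fin n, i ≤ j → x (π j) ≤ x (π i))
    (S : ℕ → Finset (Fin n))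
    (hS : ∀ j : ℕ, S j = Finset.univ.filter (fun k : Fin n => ((π.symm k : Fin n) : ℕ) < j))
    (g : Fin n → ℤ)
    (hg : ∀ i : Fin n, g (π i) = f (S ((i : ℕ) + 1)) - f (S (i : ℕ))) :
    ∑ j : Fin n, |g j| ≤ 3 * M := by
  classical
  set N : ℕ → Finset (Fin n) :=
    fun j => Finset.univ.filter (fun k : Fin n => ((π.symm k : Fin n) : ℕ) < j ∧ 0 < g k)
    with hN
  have hS0 : S 0 = ∅ := by simp [hS]
  have hN0 : N 0 = ∅ := by simp [hN]
  have key : ∀ i ∈ Finset.range n,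
      |f (S (i+1)) - f (S i)| ≤
        (-(f (S (i+1)) - f (S i))) + 2 * (f (N (i+1)) - f (N i)) := by
    intro i hi
    rw [Finset.mem_range] at hi
    set e : Fin n := π ⟨i, hi⟩ with he
    have hsymm : π.symm e = ⟨i, hi⟩ := Equiv.symm_apply_apply _ _
    have hmem : ∀ k : Fin n, k = e ↔ ((π.symm k : Fin n) : ℕ) = i := by
      intro k
      constructor
      · rintro rfl; rw [hsymm]
      · intro h
        have : π.symm k = π.symm e := by rw [hsymm]; exact Fin.ext h
        exact π.symm.injective this
    have heS : e ∉ S i := by simp [hS, hsymm]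
    have hSsucc : S (i+1) = insert e (S i) := by
      ext k
      simp only [hS, Finset.mem_filter, Finset.mem_univ, true_and, Finset.mem_insert,
        Nat.lt_succ_iff_lt_or_eq]
      rw [hmem k]; tauto
    have hNS : N i ⊆ S i := by
      intro k hk
      simp only [hN, Finset.mem_filter, Finset.mem_univ, true_and] at hk
      simp [hS, hk.1]
    have hge : g e = f (S (i+1)) - f (S i) := hg ⟨i, hi⟩
    by_cases hpos : 0 < g e
    · have hNsucc : N (i+1) = insert e (N i) := by
        ext k
        simp only [hN, Finset.mem_filter, Finset.mem_univ, true_and, Finset.mem_insert,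
          Nat.lt_succ_iff_lt_or_eq]
        constructor
        · rintro ⟨h1 | h1, h2⟩
          · exact Or.inr ⟨h1, h2⟩
          · exact Or.inl ((hmem k).mpr h1)
        · rintro (rfl | ⟨h1, h2⟩)
          · exact ⟨Or.inr ((hmem e).mp rfl), hpos⟩
          · exact ⟨Or.inl h1, h2⟩
      have heN : e ∉ N i := fun h => heS (hNS h)
      have hsm := hsub (insert e (N i)) (S i)
      have hu : insert e (N i) ∪ S i = S (i+1) := by
        rw [hSsucc]
        ext k
        simp only [Finset.mem_union, Finset.mem_insert]
        constructor
        · rintro ((rfl | h) | h)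
          · exact Or.inl rfl
          · exact Or.inr (hNS h)
          · exact Or.inr h
        · rintro (rfl | h)
          · exact Or.inl (Or.inl rfl)
          · exact Or.inr h
      have hi' : insert e (N i) ∩ S i = N i := by
        ext k
        simp only [Finset.mem_inter, Finset.mem_insert]
        constructor
        · rintro ⟨rfl | h, h2⟩
          · exact absurd h2 heS
          · exact h
        · intro h; exact ⟨Or.inr h, hNS h⟩
      rw [hu, hi'] at hsm
      rw [hNsucc]
      have habs : |f (S (i+1)) - f (S i)| = f (S (i+1)) - f (S i) := by
        rw [abs_of_pos]; rw [← hge]; exact hpos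
      rw [habs]
      linarith
    · have hNsucc : N (i+1) = N i := by
        ext k
        simp only [hN, Finset.mem_filter, Finset.mem_univ, true_and,
          Nat.lt_succ_iff_lt_or_eq]
        constructor
        · rintro ⟨h1 | h1, h2⟩
          · exact ⟨h1, h2⟩
          · exact absurd h2 (by rw [(hmem k).mpr h1]; exact hpos)
        · rintro ⟨h1, h2⟩; exact ⟨Or.inl h1, h2⟩
      rw [hNsucc]
      have : f (S (i+1)) - f (S i) ≤ 0 := by rw [← hge]; exact not_lt.mp hpos
      rw [abs_of_nonpos this]
      linarith
  have hsum : ∑ j : Fin n, |g j| = ∑ i ∈ Finset.range n, |f (S (i+1)) - f (S i)| := by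
    rw [← Equiv.sum_comp π (fun j => |g j|)]
    simp only [hg]
    exact Fin.sum_univ_eq_sum_range (fun i => |f (S (i+1)) - f (S i)|) n
  have t1 : ∑ i ∈ Finset.range n, (f (S (i+1)) - f (S i)) = f (S n) - f (S 0) :=
    Finset.sum_range_sub (fun i => f (S i)) n
  have t2 : ∑ i ∈ Finset.range n, (f (N (i+1)) - f (N i)) = f (N n) - f (N 0) :=
    Finset.sum_range_sub (fun i => f (N i)) n
  rw [hsum]
  calc ∑ i ∈ Finset.range n, |f (S (i+1)) - f (S i)|
      ≤ ∑ i ∈ Finset.range n,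
          ((-(f (S (i+1)) - f (S i))) + 2 * (f (N (i+1)) - f (N i))) :=
        Finset.sum_le_sum key
    _ = -(f (S n) - f (S 0)) + 2 * (f (N n) - f (N 0)) := by
        rw [Finset.sum_add_distrib, Finset.sum_neg_distrib, ← Finset.mul_sum, t1, t2]
    _ ≤ 3 * M := by
        have h1 := abs_le.mp (hbd (S n))
        have h2 := abs_le.mp (hbd (N n))
        rw [hS0, hN0, h0]
        linarith
end

section
/- Let f : 2^[n] → ℝ be submodular and let f_Lov(x) := Σ_{i=1}^n x_{π(i)} (f(S_{π,i}) − f(S_{π,i−1})) be its Lovász extension, where π sorts x decreasingly. Then min over x ∈ [0,1]ⁿ of f_Lov(x) equals min over S ⊆ [n] of f(S). -/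
open Finset

private lemma abel_sum (y g : ℕ → ℝ) (N : ℕ) :
    ∑ i ∈ Finset.range N, y i * (g (i+1) - g i)
      = ∑ i ∈ Finset.range N, (y i - y (i+1)) * g (i+1) + y N * g N - y 0 * g 0 := by
  induction N with
  | zero => simp
  | succ N ih => rw [Finset.sum_range_succ, Finset.sum_range_succ, ih]; ring

section main

variable (n : ℕ) (f : Finset (Fin n) → ℝ) (π : Equiv.Perm (Fin n))

/-- prefix set function -/
private def gfun (t : ℕ) : ℝ :=
  f (Finset.univ.filter (fun k : Fin n => ((π.symm k : Fin n) : ℕ) < t))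

private def yfun (x : Fin n → ℝ) (i : ℕ) : ℝ :=
  if h : i < n then x (π ⟨i, h⟩) else 0

private lemma sum_eq (x : Fin n → ℝ) :
    (∑ i : Fin n, x (π i) *
        (f (Finset.univ.filter (fun k : Fin n => ((π.symm k : Fin n) : ℕ) < (i : ℕ) + 1)) -
         f (Finset.univ.filter (fun k : Fin n => ((π.symm k : Fin n) : ℕ) < (i : ℕ)))))
      = ∑ i ∈ Finset.range n, yfun n π x i * (gfun n f π (i+1) - gfun n f π i) := by
  rw [← Fin.sum_univ_eq_sum_range (fun i : ℕ => yfun n π x i * (gfun n f π (i+1) - gfun n f π i)) n]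
  refine Finset.sum_congr rfl fun i _ => ?_
  simp [yfun, gfun, i.isLt]

private lemma g_zero (h0 : f ∅ = 0) : gfun n f π 0 = 0 := by
  simp [gfun, h0]

private lemma y_top (x : Fin n → ℝ) : yfun n π x n = 0 := by
  simp [yfun]

private lemma lovasz_bound (h0 : f ∅ = 0)
    (m : ℝ) (hm : ∀ S, m ≤ f S) (hm0 : m ≤ 0)
    (x : Fin n → ℝ) (hx0 : ∀ i, 0 ≤ x i) (hx1 : ∀ i, x i ≤ 1)
    (hπ : ∀ i j : Fin n, i ≤ j → x (π j) ≤ x (π i)) :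
    m ≤ ∑ i : Fin n, x (π i) *
        (f (Finset.univ.filter (fun k : Fin n => ((π.symm k : Fin n) : ℕ) < (i : ℕ) + 1)) -
         f (Finset.univ.filter (fun k : Fin n => ((π.symm k : Fin n) : ℕ) < (i : ℕ)))) := by
  set y := yfun n π x with hy
  set g := gfun n f π with hg
  have hanti : ∀ i : ℕ, y (i+1) ≤ y i := by
    intro i
    by_cases h : i + 1 < n
    · have h' : i < n := Nat.lt_of_succ_lt h
      simp only [hy, yfun, dif_pos h, dif_pos h']
      exact hπ ⟨i, h'⟩ ⟨i+1, h⟩ (by simp)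
    · by_cases h' : i < n
      · simp only [hy, yfun, dif_neg h, dif_pos h']
        exact hx0 _
      · simp [hy, yfun, h, h']
  have hy0le : y 0 ≤ 1 := by
    by_cases h : 0 < n
    · simp only [hy, yfun, dif_pos h]; exact hx1 _
    · simp [hy, yfun, h]
  rw [sum_eq, abel_sum, y_top, g_zero n f π h0]
  simp only [zero_mul, mul_zero, add_zero, sub_zero]
  have step1 : ∑ i ∈ Finset.range n, (y i - y (i+1)) * m
      ≤ ∑ i ∈ Finset.range n, (y i - y (i+1)) * g (i+1) := by
    refine Finset.sum_le_sum fun i _ => ?_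
    exact mul_le_mul_of_nonneg_left (hm _) (sub_nonneg.2 (hanti i))
  have step2 : ∑ i ∈ Finset.range n, (y i - y (i+1)) * m = y 0 * m := by
    have hyn : y n = 0 := y_top n π x
    rw [← Finset.sum_mul, Finset.sum_range_sub' y n, hyn]
    ring
  have step3 : m ≤ y 0 * m := by
    calc m = 1 * m := (one_mul m).symm
    _ ≤ y 0 * m := mul_le_mul_of_nonpos_right hy0le hm0
  linarith

private lemma lovasz_indicator (h0 : f ∅ = 0) (S : Finset (Fin n))
    (hπ : ∀ i j : Fin n, i ≤ j →
      (if π j ∈ S then (1:ℝ) else 0) ≤ (if π i ∈ S then (1:ℝ) else 0)) :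
    (∑ i : Fin n, (if π i ∈ S then (1:ℝ) else 0) *
        (f (Finset.univ.filter (fun k : Fin n => ((π.symm k : Fin n) : ℕ) < (i : ℕ) + 1)) -
         f (Finset.univ.filter (fun k : Fin n => ((π.symm k : Fin n) : ℕ) < (i : ℕ)))))
      = f S := by
  set x : Fin n → ℝ := fun k => if k ∈ S then (1:ℝ) else 0 with hx
  set s := S.card with hs
  set T : Finset (Fin n) := Finset.univ.filter (fun i => π i ∈ S) with hT
  have hdown : ∀ i j : Fin n, i ≤ j → j ∈ T → i ∈ T := by
    intro i j hij hj
    simp only [hT, Finset.mem_filter, Finset.mem_univ, true_and] at hj ⊢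
    have := hπ i j hij
    rw [if_pos hj] at this
    by_contra h
    rw [if_neg h] at this
    norm_num at this
  have hcardT : T.card = s := by
    rw [hs]
    apply Finset.card_bij (fun i _ => π i)
    · intro i hi
      simp only [hT, Finset.mem_filter, Finset.mem_univ, true_and] at hi
      exact hi
    · intro a ha b hb hab
      exact π.injective hab
    · intro b hb
      refine ⟨π.symm b, ?_, by simp⟩
      simp [hT, hb]
  have hmem : ∀ i : Fin n, i ∈ T ↔ (i : ℕ) < s := by
    intro i
    constructor
    · intro hi
      have hsub : Finset.Iic i ⊆ T := fun j hj => hdown j i (Finset.mem_Iic.1 hj) hi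
      have := Finset.card_le_card hsub
      rw [Fin.card_Iic, hcardT] at this
      omega
    · intro hi
      by_contra h
      have hsub : T ⊆ Finset.Iio i := by
        intro j hj
        rw [Finset.mem_Iio]
        by_contra hji
        exact h (hdown i j (le_of_not_gt hji) hj)
      have := Finset.card_le_card hsub
      rw [Fin.card_Iio, hcardT] at this
      omega
  have hval : ∀ i : Fin n, (if π i ∈ S then (1:ℝ) else 0) = if (i : ℕ) < s then (1:ℝ) else 0 := by
    intro i
    have := hmem i
    simp only [hT, Finset.mem_filter, Finset.mem_univ, true_and] at this
    by_cases h : π i ∈ S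
    · rw [if_pos h, if_pos (this.1 h)]
    · rw [if_neg h, if_neg (fun hc => h (this.2 hc))]
  have hsn : s ≤ n := by
    rw [hs]
    simpa using Finset.card_le_card (Finset.subset_univ S)
  set g := gfun n f π with hg
  have key : (∑ i : Fin n, (if π i ∈ S then (1:ℝ) else 0) *
        (f (Finset.univ.filter (fun k : Fin n => ((π.symm k : Fin n) : ℕ) < (i : ℕ) + 1)) -
         f (Finset.univ.filter (fun k : Fin n => ((π.symm k : Fin n) : ℕ) < (i : ℕ)))))
      = ∑ i ∈ Finset.range n, (if i < s then (1:ℝ) else 0) * (g (i+1) - g i) := by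
    rw [← Fin.sum_univ_eq_sum_range (fun i : ℕ => (if i < s then (1:ℝ) else 0) * (g (i+1) - g i)) n]
    refine Finset.sum_congr rfl fun i _ => ?_
    rw [hval i]
    rfl
  rw [key]
  have key2 : ∑ i ∈ Finset.range n, (if i < s then (1:ℝ) else 0) * (g (i+1) - g i)
      = ∑ i ∈ Finset.range s, (g (i+1) - g i) := by
    rw [← Finset.sum_subset (Finset.range_subset_range.2 hsn)
      (fun i _ hi => by rw [if_neg (by simpa using hi), zero_mul])]
    refine Finset.sum_congr rfl fun i hi => ?_
    rw [if_pos (Finset.mem_range.1 hi), one_mul]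
  have hg0 : g 0 = 0 := g_zero n f π h0
  rw [key2, Finset.sum_range_sub, hg0, sub_zero]
  have hAs : (Finset.univ.filter (fun k : Fin n => ((π.symm k : Fin n) : ℕ) < s)) = S := by
    ext k
    have hk := hval (π.symm k)
    simp only [Equiv.apply_symm_apply] at hk
    simp only [Finset.mem_filter, Finset.mem_univ, true_and]
    constructor
    · intro h
      by_contra hkS
      rw [if_neg hkS, if_pos h] at hk
      norm_num at hk
    · intro h
      by_contra hlt
      rw [if_pos h, if_neg hlt] at hk
      norm_num at hk
  show gfun n f π s = f S
  unfold gfun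
  rw [hAs]

end main

/-- the minimum of the Lovász extension over the box `[0,1]ⁿ`
equals the minimum of the submodular function `f` over all subsets. The Lovász
extension `fL` is specified by the sorted-prefix formula. -/
theorem stmt_15 (n : ℕ) (f : Finset (Fin n) → ℝ)
    (hsub : ∀ A B : Finset (Fin n), f (A ∪ B) + f (A ∩ B) ≤ f A + f B)
    (h0 : f ∅ = 0)
    (fL : (Fin n → ℝ) → ℝ)
    (hfL : ∀ (x : Fin n → ℝ) (π : Equiv.Perm (Fin n)),
      (∀ i j : Fin n, i ≤ j → x (π j) ≤ x (π i)) →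
      fL x = ∑ i : Fin n,
        x (π i) *
          (f (Finset.univ.filter (fun k : Fin n => ((π.symm k : Fin n) : ℕ) < (i : ℕ) + 1)) -
           f (Finset.univ.filter (fun k : Fin n => ((π.symm k : Fin n) : ℕ) < (i : ℕ))))) :
    ∃ m : ℝ, IsLeast (fL '' Set.Icc (0 : Fin n → ℝ) 1) m ∧ IsLeast (Set.range f) m := by
  obtain ⟨S₀, -, hS₀⟩ := Finset.exists_min_image (Finset.univ : Finset (Finset (Fin n))) f
    ⟨∅, Finset.mem_univ _⟩
  set m := f S₀ with hm
  have hmle : ∀ S, m ≤ f S := fun S => hS₀ S (Finset.mem_univ S)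
  have hm0 : m ≤ 0 := h0 ▸ hmle ∅
  -- sorting permutation for a given x
  have hsort : ∀ x : Fin n → ℝ, ∃ π : Equiv.Perm (Fin n),
      ∀ i j : Fin n, i ≤ j → x (π j) ≤ x (π i) := by
    intro x
    refine ⟨(Fin.revPerm).trans (Tuple.sort x), fun i j hij => ?_⟩
    have := Tuple.monotone_sort x (Fin.rev_le_rev.2 hij)
    simpa using this
  refine ⟨m, ⟨?_, ?_⟩, ⟨⟨S₀, rfl⟩, ?_⟩⟩
  · -- m is attained by the indicator of S₀
    set x : Fin n → ℝ := fun k => if k ∈ S₀ then (1:ℝ) else 0 with hx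
    obtain ⟨π, hπ⟩ := hsort x
    refine ⟨x, ?_, ?_⟩
    · constructor
      · intro i; simp only [hx, Pi.zero_apply]; positivity
      · intro i; simp only [hx, Pi.one_apply]; split <;> norm_num
    · rw [hfL x π hπ]
      exact lovasz_indicator n f π h0 S₀ hπ
  · rintro v ⟨x, hxI, rfl⟩
    obtain ⟨π, hπ⟩ := hsort x
    rw [hfL x π hπ]
    exact lovasz_bound n f π h0 m hmle hm0 x (fun i => hxI.1 i) (fun i => hxI.2 i) hπ
  · rintro v ⟨S, rfl⟩
    exact hmle S
end

section
/- Let f : ℝⁿ → ℝ be L-Lipschitz in the ℓ₂-norm with L > 0, c ∈ ℝⁿ, R > 0, ε ∈ (0, LR], and let F : ℝⁿ → ℝ satisfy |F(x) − f_reg(x)| ≤ ε for all x, where f_reg(x) := f(x) + 2L·max(0, ‖x − c‖₂ − R). Then every minimizer x* of F satisfies ‖x* − c‖₂ ≤ 3R. -/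
/-!
Radially projecting a point `y` at distance `t > R` from `c` onto the sphere of radius `R` costs
at most `L (t - R)` in `f` but saves `2L (t - R)` in penalty, so `f_reg` drops by at least
`L (t - R)`. When `t > 3R` this exceeds `2LR ≥ 2ε`, which the uniform approximation error cannot
hide, so `y` does not minimize `F`.
-/

open AffineMap

section
variable {E : Type*} [NormedAddCommGroup E] [NormedSpace ℝ E]

theorem exists_norm_sub_eq_and_norm_sub_eq_sub {R : ℝ} (c y : E) (hR : 0 ≤ R)
    (hy : R ≤ ‖y - c‖) : ∃ z : E, ‖z - c‖ = R ∧ ‖y - z‖ = ‖y - c‖ - R := by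
  have hr₀ : 0 ≤ R / ‖y - c‖ := by positivity
  have hr₁ : R / ‖y - c‖ ≤ 1 := div_le_one_of_le₀ hy (norm_nonneg _)
  have hcancel : R / ‖y - c‖ * ‖y - c‖ = R :=
    div_mul_cancel_of_imp fun h => le_antisymm (h ▸ hy) hR
  refine ⟨lineMap c y (R / ‖y - c‖), ?_, ?_⟩
  · rw [← dist_eq_norm, dist_lineMap_left, Real.norm_of_nonneg hr₀, dist_comm, dist_eq_norm,
      hcancel]
  · rw [← dist_eq_norm, dist_comm, dist_lineMap_right, Real.norm_of_nonneg (by linarith),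
      dist_comm, dist_eq_norm, sub_mul, one_mul, hcancel]

theorem exists_add_penalty_le {f : E → ℝ} {L : ℝ}
    (hlip : ∀ x y, |f x - f y| ≤ L * ‖x - y‖) (μ : ℝ) (c : E) {R : ℝ} (hR : 0 ≤ R) (y : E) :
    ∃ z : E, f z + μ * max 0 (‖z - c‖ - R) + (μ - L) * max 0 (‖y - c‖ - R)
      ≤ f y + μ * max 0 (‖y - c‖ - R) := by
  rcases le_total ‖y - c‖ R with hin | hout
  · exact ⟨y, by simp [max_eq_left (sub_nonpos.mpr hin)]⟩
  obtain ⟨z, hzc, hyz⟩ := exists_norm_sub_eq_and_norm_sub_eq_sub c y hR hout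
  have hfz : f z ≤ f y + L * (‖y - c‖ - R) := by
    have := (abs_le.mp (hlip z y)).2
    rw [norm_sub_rev, hyz] at this
    linarith
  refine ⟨z, ?_⟩
  rw [hzc, sub_self, max_self, max_eq_right (sub_nonneg.mpr hout)]
  linarith

end

theorem stmt_18_general (n : ℕ) (f : EuclideanSpace ℝ (Fin n) → ℝ) (L : ℝ) (hL : 0 < L)
    (hlip : ∀ x y : EuclideanSpace ℝ (Fin n), |f x - f y| ≤ L * ‖x - y‖)
    (c : EuclideanSpace ℝ (Fin n)) (R : ℝ) (hR : 0 < R)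
    (ε : ℝ) (hεLR : ε ≤ L * R)
    (freg F : EuclideanSpace ℝ (Fin n) → ℝ)
    (hfreg : ∀ x, freg x = f x + 2 * L * max 0 (‖x - c‖ - R))
    (hF : ∀ x, |F x - freg x| ≤ ε) :
    ∀ xstar : EuclideanSpace ℝ (Fin n),
      (∀ z, F xstar ≤ F z) → ‖xstar - c‖ ≤ 3 * R := by
  intro y hmin
  by_contra! hfar
  obtain ⟨z, hz⟩ := exists_add_penalty_le hlip (2 * L) c hR.le y
  have hFz := (abs_le.mp (hF z)).2
  have hFy := (abs_le.mp (hF y)).1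
  rw [hfreg] at hFz hFy
  have hpen : max 0 (‖y - c‖ - R) = ‖y - c‖ - R := max_eq_right (by linarith)
  rw [hpen] at hz hFy
  have hgain : 2 * ε < (2 * L - L) * (‖y - c‖ - R) := by nlinarith
  linarith [hmin z]

/-- if `F` uniformly `ε`-approximates the ℓ₂-regularized function
`f_reg x = f x + 2L max(0, ‖x - c‖₂ - R)` with `ε ∈ (0, LR]`, then every minimizer
of `F` lies within distance `3R` of `c`. -/
theorem stmt_18 (n : ℕ) (f : EuclideanSpace ℝ (Fin n) → ℝ) (L : ℝ) (hL : 0 < L)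
    (hlip : ∀ x y : EuclideanSpace ℝ (Fin n), |f x - f y| ≤ L * ‖x - y‖)
    (c : EuclideanSpace ℝ (Fin n)) (R : ℝ) (hR : 0 < R)
    (ε : ℝ) (hε : 0 < ε) (hεLR : ε ≤ L * R)
    (freg F : EuclideanSpace ℝ (Fin n) → ℝ)
    (hfreg : ∀ x, freg x = f x + 2 * L * max 0 (‖x - c‖ - R))
    (hF : ∀ x, |F x - freg x| ≤ ε) :
    ∀ xstar : EuclideanSpace ℝ (Fin n),
      (∀ z, F xstar ≤ F z) → ‖xstar - c‖ ≤ 3 * R :=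
  stmt_18_general n f L hL hlip c R hR ε hεLR freg F hfreg hF
end
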